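/- Let M be a metric space with base point 0 and let (m_{u_iv_i})_{i∈ℕ} be a sequence of molecules in F(M) such that at least one of the sequences (u_i) and (v_i) is unbounded in M. Then, viewing each m_{u_iv_i} as an element of Lip_0(M)*, one has limsup_{i→∞} ‖F + m_{u_iv_i}‖ = 2 for every F in the unit sphere of the dual space Lip_0(M)*. -/

import Mathlib

open Metric Set Filter NNReal

noncomputable section

namespace NormedSpace

/-- The topological dual of a seminormed space `E`, as in the older Mathlib
(removed since; its topology comes from the norm of `E`). -/
abbrev Dual (𝕜 : Type*) [RCLike 𝕜] (E : Type*) [SeminormedAddCommGroup E] [NormedSpace 𝕜 E] :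
    Type _ :=
  E →L[𝕜] 𝕜

end NormedSpace

namespace DeltaPaper

/-! ### Generic Banach space notions -/

variable {X : Type*} [NormedAddCommGroup X] [NormedSpace ℝ X]

/-- `x` is a Daugavet-point: every slice of the unit ball contains, for every `ε > 0`,
an element at distance at least `2 - ε` from `x`. -/
def IsDaugavetPoint (x : X) : Prop :=
  ∀ (φ : NormedSpace.Dual ℝ X) (α : ℝ), ‖φ‖ = 1 → 0 < α → ∀ ε > 0,
    ∃ y : X, ‖y‖ ≤ 1 ∧ 1 - α < φ y ∧ 2 - ε ≤ ‖x - y‖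

/-- `x` is a Δ-point: every slice of the unit ball containing `x` contains, for every
`ε > 0`, an element at distance at least `2 - ε` from `x`. -/
def IsDeltaPoint (x : X) : Prop :=
  ∀ (φ : NormedSpace.Dual ℝ X) (α : ℝ), ‖φ‖ = 1 → 0 < α → 1 - α < φ x → ∀ ε > 0,
    ∃ y : X, ‖y‖ ≤ 1 ∧ 1 - α < φ y ∧ 2 - ε ≤ ‖x - y‖

/-- `x*` is a w*-Daugavet-point of the dual of `X`. -/
def IsWeakStarDaugavetPoint (f : NormedSpace.Dual ℝ X) : Prop :=
  ∀ (x : X) (α : ℝ), ‖x‖ = 1 → 0 < α → ∀ ε > 0,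
    ∃ g : NormedSpace.Dual ℝ X, ‖g‖ ≤ 1 ∧ 1 - α < g x ∧ 2 - ε ≤ ‖f - g‖

/-- `x*` is a w*-Δ-point of the dual of `X`. -/
def IsWeakStarDeltaPoint (f : NormedSpace.Dual ℝ X) : Prop :=
  ∀ (x : X) (α : ℝ), ‖x‖ = 1 → 0 < α → 1 - α < f x → ∀ ε > 0,
    ∃ g : NormedSpace.Dual ℝ X, ‖g‖ ≤ 1 ∧ 1 - α < g x ∧ 2 - ε ≤ ‖f - g‖

/-- `x` is a denting point of the unit ball: it lies in slices of the unit ball of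
arbitrarily small diameter. -/
def IsDentingPoint (x : X) : Prop :=
  ‖x‖ ≤ 1 ∧ ∀ ε > 0, ∃ (φ : NormedSpace.Dual ℝ X) (α : ℝ), ‖φ‖ = 1 ∧ 0 < α ∧
    1 - α < φ x ∧ Metric.diam {y : X | ‖y‖ ≤ 1 ∧ 1 - α < φ y} < ε

/-- The Kuratowski measure of non-compactness of a set: the infimum of all `ε > 0`
such that the set can be covered by finitely many sets of diameter less than `ε`. -/
def kuratowski {Y : Type*} [PseudoMetricSpace Y] (A : Set Y) : ℝ :=
  sInf {ε : ℝ | 0 < ε ∧ ∃ 𝒞 : Finset (Set Y), (A ⊆ ⋃ B ∈ 𝒞, B) ∧ ∀ B ∈ 𝒞, Metric.diam B < ε}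

/-! ### The space of Lipschitz functions vanishing at a base point -/

variable {M : Type*} [PseudoMetricSpace M]

/-- The least Lipschitz constant of a function. -/
def lipConst (f : M → ℝ) : ℝ≥0 := sInf {K | LipschitzWith K f}

theorem lipschitzWith_lipConst {f : M → ℝ} (hf : ∃ K, LipschitzWith K f) :
    LipschitzWith (lipConst f) f := by
  obtain ⟨K₀, hK₀⟩ := hf
  rw [lipschitzWith_iff_dist_le_mul]
  intro x y
  rcases le_or_gt (dist x y) 0 with h | h
  · have h0 : dist x y = 0 := le_antisymm h dist_nonneg
    have := hK₀.dist_le_mul x y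
    rw [h0, mul_zero] at this ⊢
    exact this
  · rw [← div_le_iff₀ h]
    have hnn : 0 ≤ dist (f x) (f y) / dist x y := by positivity
    rw [← Real.coe_toNNReal _ hnn, NNReal.coe_le_coe]
    refine le_csInf ⟨K₀, hK₀⟩ ?_
    intro K hK
    rw [← NNReal.coe_le_coe, Real.coe_toNNReal _ hnn, div_le_iff₀ h]
    exact hK.dist_le_mul x y

theorem lipConst_le {f : M → ℝ} {K : ℝ≥0} (hK : LipschitzWith K f) : lipConst f ≤ K :=
  csInf_le (OrderBot.bddBelow _) hK

theorem lipschitzWith_smul {f : M → ℝ} {K : ℝ≥0} (hK : LipschitzWith K f) (c : ℝ) :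
    LipschitzWith (‖c‖₊ * K) (c • f) := by
  rw [lipschitzWith_iff_dist_le_mul] at *
  intro x y
  have : dist ((c • f) x) ((c • f) y) = ‖c‖ * dist (f x) (f y) := by
    simp only [Pi.smul_apply, smul_eq_mul, Real.dist_eq, ← mul_sub, abs_mul, Real.norm_eq_abs]
  rw [this, NNReal.coe_mul, coe_nnnorm, mul_assoc]
  exact mul_le_mul_of_nonneg_left (hK x y) (norm_nonneg c)

variable (M) in
/-- The submodule of `M → ℝ` consisting of Lipschitz functions vanishing at the
base point `z`. -/
def Lip0 (z : M) : Submodule ℝ (M → ℝ) where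
  carrier := {f | (∃ K, LipschitzWith K f) ∧ f z = 0}
  add_mem' := by
    rintro f g ⟨⟨K, hK⟩, hf0⟩ ⟨⟨L, hL⟩, hg0⟩
    exact ⟨⟨K + L, hK.add hL⟩, by simp [hf0, hg0]⟩
  zero_mem' := ⟨⟨0, LipschitzWith.const' 0⟩, rfl⟩
  smul_mem' := by
    rintro c f ⟨⟨K, hK⟩, hf0⟩
    exact ⟨⟨‖c‖₊ * K, lipschitzWith_smul hK c⟩, by simp [hf0]⟩

variable {z : M}

instance : NormedAddCommGroup ↥(Lip0 M z) :=
  AddGroupNorm.toNormedAddCommGroup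
    { toFun := fun f => ((lipConst (f : M → ℝ) : ℝ≥0) : ℝ)
      map_zero' := by
        have h0 : lipConst (0 : M → ℝ) = 0 :=
          le_antisymm (lipConst_le (by simpa using LipschitzWith.const' (0 : ℝ))) bot_le
        show ((lipConst ((0 : ↥(Lip0 M z)) : M → ℝ) : ℝ≥0) : ℝ) = 0
        rw [show ((0 : ↥(Lip0 M z)) : M → ℝ) = 0 from rfl, h0, NNReal.coe_zero]
      add_le' := by
        intro f g
        have hf := lipschitzWith_lipConst f.2.1
        have hg := lipschitzWith_lipConst g.2.1
        have : lipConst ((f + g : ↥(Lip0 M z)) : M → ℝ) ≤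
            lipConst (f : M → ℝ) + lipConst (g : M → ℝ) := by
          refine lipConst_le ?_
          have := hf.add hg
          exact this
        exact_mod_cast this
      neg' := by
        intro f
        show ((lipConst ((-f : ↥(Lip0 M z)) : M → ℝ) : ℝ≥0) : ℝ) = _
        rw [show ((-f : ↥(Lip0 M z)) : M → ℝ) = -(f : M → ℝ) from rfl]
        unfold lipConst
        congr 2
        ext K
        exact ⟨fun hK => by simpa using hK.neg, fun hK => hK.neg⟩
      eq_zero_of_map_eq_zero' := by
        intro f hf
        replace hf : ((lipConst (f : M → ℝ) : ℝ≥0) : ℝ) = 0 := hf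
        have h0 : lipConst (f : M → ℝ) = 0 := by exact_mod_cast hf
        have hl : LipschitzWith 0 (f : M → ℝ) := h0 ▸ lipschitzWith_lipConst f.2.1
        ext x
        have := hl.dist_le_mul x z
        simp only [NNReal.coe_zero, zero_mul] at this
        have hxz : (f : M → ℝ) x = (f : M → ℝ) z :=
          dist_le_zero.mp this
        simpa [f.2.2] using hxz }

theorem Lip0.norm_def (f : ↥(Lip0 M z)) : ‖f‖ = ((lipConst (f : M → ℝ) : ℝ≥0) : ℝ) := rfl

theorem Lip0.lipschitzWith (f : ↥(Lip0 M z)) : LipschitzWith (lipConst (f : M → ℝ)) (f : M → ℝ) :=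
  lipschitzWith_lipConst f.2.1

instance : NormedSpace ℝ ↥(Lip0 M z) where
  norm_smul_le c f := by
    have : lipConst ((c • f : ↥(Lip0 M z)) : M → ℝ) ≤ ‖c‖₊ * lipConst (f : M → ℝ) :=
      lipConst_le (lipschitzWith_smul (Lip0.lipschitzWith f) c)
    calc ‖c • f‖ = ((lipConst ((c • f : ↥(Lip0 M z)) : M → ℝ) : ℝ≥0) : ℝ) := rfl
      _ ≤ ((‖c‖₊ * lipConst (f : M → ℝ) : ℝ≥0) : ℝ) := by exact_mod_cast this
      _ = ‖c‖ * ‖f‖ := by push_cast [Lip0.norm_def]; rfl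

variable (M z) in
/-- The evaluation functional `δ_x ∈ Lip₀(M)*`. -/
def evalδ (x : M) : NormedSpace.Dual ℝ ↥(Lip0 M z) :=
  LinearMap.mkContinuous
    { toFun := fun f => (f : M → ℝ) x
      map_add' := fun f g => rfl
      map_smul' := fun c f => rfl }
    (dist x z)
    (by
      intro f
      have := (Lip0.lipschitzWith f).dist_le_mul x z
      simp only [f.2.2, Real.dist_eq, sub_zero] at this
      calc ‖(f : M → ℝ) x‖ = |(f : M → ℝ) x - 0| := by simp
        _ ≤ (lipConst (f : M → ℝ) : ℝ) * dist x z := by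
            simpa [f.2.2, Real.dist_eq] using (Lip0.lipschitzWith f).dist_le_mul x z
        _ = dist x z * ‖f‖ := by rw [Lip0.norm_def, mul_comm])

variable (M z) in
/-- The Lipschitz-free space over `M`: the closed linear span of the evaluation
functionals inside `Lip₀(M)*`. -/
def FreeSpace : Submodule ℝ (NormedSpace.Dual ℝ ↥(Lip0 M z)) :=
  (Submodule.span ℝ (Set.range (evalδ M z))).topologicalClosure

variable (M z) in
/-- The molecule `m_{x y} = (δ_x - δ_y)/d(x,y)` as an element of `Lip₀(M)*`. -/
def molecule (x y : M) : NormedSpace.Dual ℝ ↥(Lip0 M z) :=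
  (dist x y)⁻¹ • (evalδ M z x - evalδ M z y)

theorem molecule_mem_freeSpace (x y : M) : molecule M z x y ∈ FreeSpace M z :=
  Submodule.le_topologicalClosure _
    (Submodule.smul_mem _ _ (Submodule.sub_mem _
      (Submodule.subset_span ⟨x, rfl⟩) (Submodule.subset_span ⟨y, rfl⟩)))

variable (M z) in
/-- The molecule `m_{x y}` as an element of the free space `F(M)`. -/
def mol (x y : M) : ↥(FreeSpace M z) := ⟨molecule M z x y, molecule_mem_freeSpace x y⟩

variable (M) in
/-- A metric space is uniformly discrete if distances between distinct points are
bounded below by a positive constant. -/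
def UniformlyDiscrete : Prop := ∃ θ > (0:ℝ), ∀ x y : M, x ≠ y → θ ≤ dist x y

/-- A norm-one Lipschitz function is local if its Lipschitz constant is approximated
on pairs of arbitrarily close points. -/
def IsLocal (f : ↥(Lip0 M z)) : Prop :=
  ∀ ε > 0, ∃ u v : M, u ≠ v ∧
    ‖f‖ - ε < ((f : M → ℝ) u - (f : M → ℝ) v) / dist u v ∧ dist u v < ε

/-- `f ∈ S_{Lip₀(M)}` is a w*-Daugavet-point: for every w*-slice `S(μ, α)` of
`B_{Lip₀(M)}` (`μ` a norm-one element of `F(M)`) and every `ε > 0` there is `g` in the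
slice with `‖f - g‖ ≥ 2 - ε`. -/
def IsLipWeakStarDaugavetPoint (f : ↥(Lip0 M z)) : Prop :=
  ∀ μ : NormedSpace.Dual ℝ ↥(Lip0 M z), μ ∈ FreeSpace M z → ‖μ‖ = 1 → ∀ α > (0:ℝ), ∀ ε > (0:ℝ),
    ∃ g : ↥(Lip0 M z), ‖g‖ ≤ 1 ∧ 1 - α < μ g ∧ 2 - ε ≤ ‖f - g‖

/-- `f ∈ S_{Lip₀(M)}` is a w*-Δ-point: the same as above, but only for w*-slices
containing `f`. -/
def IsLipWeakStarDeltaPoint (f : ↥(Lip0 M z)) : Prop :=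
  ∀ μ : NormedSpace.Dual ℝ ↥(Lip0 M z), μ ∈ FreeSpace M z → ‖μ‖ = 1 → ∀ α > (0:ℝ),
    1 - α < μ f → ∀ ε > (0:ℝ),
    ∃ g : ↥(Lip0 M z), ‖g‖ ≤ 1 ∧ 1 - α < μ g ∧ 2 - ε ≤ ‖f - g‖

end DeltaPaper

open DeltaPaper NormedSpace Filter

/-! Pick `f` in the unit ball of `Lip₀(M)` with `F f > 1 - δ`. Given a radius `P`, a pair `(u, v)`
lying beyond `4P/δ` lets one change `f` only on the annulus `P < d(·, 0) < Q` into a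
`(1 + δ)`-Lipschitz `g` with `g u - g v ≥ (1 - δ) d(u, v)`. Repeating this on `n` successive
annuli, the perturbations `g_l - f` have disjoint supports, so their sum has norm at most `6`;
for `n > 6/δ` one of them has `F (g_l - f) ≥ -δ`, and testing `F + m_{u v}` on that `g_l` gives
`‖F + m_{u v}‖ ≥ 2 - 5δ`. -/

open Function
open scoped Finset

theorem limsup_eq_of_forall_le_of_frequently_ge {ι : Type*} {l : Filter ι} {u : ι → ℝ} {a : ℝ}
    (hle : ∀ i, u i ≤ a) (hge : ∀ ε > 0, ∃ᶠ i in l, a - ε ≤ u i) : limsup u l = a := by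
  have hcobdd : l.IsCoboundedUnder (· ≤ ·) u :=
    IsCobounded.of_frequently_ge (frequently_map.2 (hge 1 one_pos))
  refine le_antisymm (limsup_le_of_le hcobdd (.of_forall hle)) (le_of_forall_sub_le fun ε hε => ?_)
  exact le_limsup_of_frequently_le (hge ε hε) (isBoundedUnder_of ⟨a, hle⟩)

theorem frequently_lt_dist_of_not_isBounded_range {X : Type*} [PseudoMetricSpace X] {u : ℕ → X}
    (hu : ¬Bornology.IsBounded (range u)) (z : X) (R : ℝ) : ∃ᶠ i in atTop, R < dist (u i) z := by
  refine frequently_atTop.2 fun N => ?_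
  by_contra! h
  refine hu ((((finite_Iio N).image u).isBounded.union
    (isBounded_closedBall (x := z) (r := R))).subset ?_)
  rintro _ ⟨i, rfl⟩
  rcases lt_or_ge i N with hi | hi
  · exact Or.inl ⟨i, hi, rfl⟩
  · exact Or.inr (h i hi)

theorem NormedSpace.Dual.exists_lt_apply_of_lt_norm {X : Type*} [NormedAddCommGroup X]
    [NormedSpace ℝ X] (F : NormedSpace.Dual ℝ X) {r : ℝ} (hr : r < ‖F‖) :
    ∃ x : X, ‖x‖ ≤ 1 ∧ r < F x := by
  obtain ⟨x, hx, hrx⟩ := F.exists_lt_apply_of_lt_opNorm hr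
  rcases le_or_gt 0 (F x) with hFx | hFx
  · exact ⟨x, hx.le, by rwa [Real.norm_of_nonneg hFx] at hrx⟩
  · refine ⟨-x, by rw [norm_neg]; exact hx.le, ?_⟩
    rwa [map_neg, ← Real.norm_of_nonpos hFx.le]

theorem LipschitzWith.sum_of_pairwise_disjoint_support {X ι : Type*} [PseudoMetricSpace X]
    {w : ι → X → ℝ} {K : ℝ≥0} (hw : ∀ l, LipschitzWith K (w l))
    (hdisj : Pairwise (Disjoint on fun l => support (w l))) (s : Finset ι) :
    LipschitzWith (2 * K) fun x => ∑ l ∈ s, w l x := by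
  classical
  have hcard : ∀ x, #{l ∈ s | w l x ≠ 0} ≤ 1 := fun x =>
    Finset.card_le_one.2 fun l hl m hm => by
      by_contra hlm
      exact Set.disjoint_left.1 (hdisj hlm) (Finset.mem_filter.1 hl).2 (Finset.mem_filter.1 hm).2
  refine LipschitzWith.of_dist_le_mul fun x y => ?_
  set d := (K : ℝ) * dist x y
  have hterm : ∀ l,
      |w l x - w l y| ≤ (if w l x ≠ 0 then d else 0) + (if w l y ≠ 0 then d else 0) := by
    intro l
    have hd : |w l x - w l y| ≤ d := by rw [← Real.dist_eq]; exact (hw l).dist_le_mul x y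
    have hd0 : 0 ≤ d := by positivity
    by_cases hx : w l x = 0 <;> by_cases hy : w l y = 0 <;> simp [hx, hy] at hd ⊢ <;> linarith
  calc dist (∑ l ∈ s, w l x) (∑ l ∈ s, w l y) = |∑ l ∈ s, (w l x - w l y)| := by
        rw [Real.dist_eq, Finset.sum_sub_distrib]
    _ ≤ ∑ l ∈ s, |w l x - w l y| := Finset.abs_sum_le_sum_abs _ _
    _ ≤ ∑ l ∈ s, ((if w l x ≠ 0 then d else 0) + (if w l y ≠ 0 then d else 0)) :=
        Finset.sum_le_sum fun l _ => hterm l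
    _ = (#{l ∈ s | w l x ≠ 0} + #{l ∈ s | w l y ≠ 0} : ℕ) * d := by
        rw [Finset.sum_add_distrib, ← Finset.sum_filter, ← Finset.sum_filter, Finset.sum_const,
          Finset.sum_const, nsmul_eq_mul, nsmul_eq_mul]
        push_cast; ring
    _ ≤ (2 : ℕ) * d := by gcongr; linarith [hcard x, hcard y]
    _ = ↑(2 * K) * dist x y := by push_cast; ring

theorem NormedSpace.Dual.exists_neg_le_apply_of_norm_sum_le {E : Type*} [NormedAddCommGroup E]
    [NormedSpace ℝ E] (F : NormedSpace.Dual ℝ E) (hF : ‖F‖ ≤ 1) {w : ℕ → E} {n : ℕ} {C δ : ℝ}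
    (hsum : ‖∑ l ∈ Finset.range n, w l‖ ≤ C) (hn : C < n * δ) :
    ∃ l ∈ Finset.range n, -δ ≤ F (w l) := by
  have hC : |F (∑ l ∈ Finset.range n, w l)| ≤ C :=
    (F.le_opNorm _).trans ((mul_le_of_le_one_left (norm_nonneg _) hF).trans hsum)
  have hn0 : n ≠ 0 := by
    rintro rfl
    rw [Nat.cast_zero, zero_mul] at hn
    linarith [(abs_nonneg _).trans hC]
  refine Finset.exists_le_of_sum_le (Finset.nonempty_range_iff.2 hn0) ?_
  rw [Finset.sum_const, Finset.card_range, nsmul_eq_mul, ← map_sum]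
  linarith [(abs_le.1 hC).1]

theorem two_sub_le_norm_add_of_apply {E : Type*} [NormedAddCommGroup E] [NormedSpace ℝ E]
    {φ ψ : NormedSpace.Dual ℝ E} {x : E} {δ : ℝ} (hδ : 0 ≤ δ) (hx : ‖x‖ ≤ 1 + δ)
    (hφ : 1 - 2 * δ ≤ φ x) (hψ : 1 - δ ≤ ψ x) : 2 - 5 * δ ≤ ‖φ + ψ‖ := by
  have h : (φ + ψ) x ≤ ‖φ + ψ‖ * (1 + δ) :=
    (le_abs_self _).trans (((φ + ψ).le_opNorm x).trans (by gcongr))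
  rw [add_apply] at h
  nlinarith [norm_nonneg (φ + ψ)]

namespace DeltaPaper

section

variable {M : Type*} [PseudoMetricSpace M] {z : M}

theorem Lip0.norm_le_of_lipschitzWith {f : Lip0 M z} {K : ℝ≥0}
    (hf : LipschitzWith K (f : M → ℝ)) : ‖f‖ ≤ K := by
  rw [Lip0.norm_def]
  exact_mod_cast lipConst_le hf

theorem Lip0.lipschitzWith_of_norm_le {f : Lip0 M z} {K : ℝ≥0} (hf : ‖f‖ ≤ K) :
    LipschitzWith K (f : M → ℝ) :=
  (Lip0.lipschitzWith f).weaken (by rw [Lip0.norm_def] at hf; exact_mod_cast hf)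

theorem Lip0.norm_sum_le_of_pairwise_disjoint_support {ι : Type*} {w : ι → Lip0 M z} {K : ℝ≥0}
    (hw : ∀ l, ‖w l‖ ≤ K) (hdisj : Pairwise (Disjoint on fun l => support (w l : M → ℝ)))
    (s : Finset ι) : ‖∑ l ∈ s, w l‖ ≤ 2 * K := by
  have := LipschitzWith.sum_of_pairwise_disjoint_support
    (fun l => Lip0.lipschitzWith_of_norm_le (hw l)) hdisj s
  have hcoe : ((∑ l ∈ s, w l : Lip0 M z) : M → ℝ) = fun x => ∑ l ∈ s, (w l : M → ℝ) x := by
    ext x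
    rw [Submodule.coe_sum, Finset.sum_apply]
  rw [← hcoe] at this
  exact_mod_cast Lip0.norm_le_of_lipschitzWith this

theorem molecule_apply (x y : M) (f : Lip0 M z) :
    molecule M z x y f = ((f : M → ℝ) x - (f : M → ℝ) y) / dist x y := by
  rw [div_eq_inv_mul]
  rfl

theorem norm_molecule_le_one (x y : M) : ‖molecule M z x y‖ ≤ 1 :=
  ContinuousLinearMap.opNorm_le_bound _ zero_le_one fun f => by
    rw [molecule_apply, one_mul, norm_div, Real.norm_eq_abs, Real.norm_eq_abs, abs_dist,
      ← Real.dist_eq, Lip0.norm_def]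
    exact div_le_of_le_mul₀ dist_nonneg (by positivity) ((Lip0.lipschitzWith f).dist_le_mul x y)

theorem exists_lipschitzWith_one_eqOn_closedBall {f : M → ℝ} (hf : LipschitzWith 1 f) {u v : M}
    (hfz : f z = 0) {δ P : ℝ} (hδ0 : 0 ≤ δ) (hδ1 : δ ≤ 1)
    (hP : 4 * P ≤ δ * (dist u z + dist v z)) :
    ∃ h : M → ℝ, LipschitzWith 1 h ∧ EqOn h f (closedBall z P) ∧
      (1 - δ) * dist u v ≤ h u - h v := by
  -- the cones `dist u z - 2P - dist · u` and `2P - dist v z + dist · v` stay below resp. above `f`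
  -- on `closedBall z P`, and they force `h u - h v ≥ min (dist u z + dist v z - 4P) (dist u v)`
  have hf_abs : ∀ x, |f x| ≤ dist x z := fun x => by
    simpa [hfz, Real.dist_eq] using hf.dist_le_mul x z
  refine ⟨fun x => min (max (f x) (dist u z - 2 * P - dist x u)) (2 * P - dist v z + dist x v),
    ?_, fun x hx => ?_, ?_⟩
  · simpa using (hf.max ((LipschitzWith.const _).sub (LipschitzWith.dist_left u))).min
      ((LipschitzWith.const _).add (LipschitzWith.dist_left v))
  · rw [mem_closedBall] at hx
    have hu := dist_triangle_left u z x
    have hv := dist_triangle_left v z x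
    have hfx := abs_le.1 (hf_abs x)
    dsimp only
    rw [max_eq_left (by linarith), min_eq_left (by linarith)]
  · have hr := dist_triangle_right u v z
    have hr' : (1 - δ) * dist u v ≤ (1 - δ) * (dist u z + dist v z) := by gcongr
    have hδr : 0 ≤ δ * dist u v := by positivity
    simp only [dist_self, sub_zero, add_zero]
    have hhv := min_le_right (max (f v) (dist u z - 2 * P - dist v u)) (2 * P - dist v z)
    have hhu : (1 - δ) * dist u v + (2 * P - dist v z) ≤
        min (max (f u) (dist u z - 2 * P)) (2 * P - dist v z + dist u v) :=
      le_min (le_max_of_le_right (by linarith)) (by linarith)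
    linarith

theorem exists_lipschitzWith_eqOn_closedBall_eqOn_compl_ball {f : M → ℝ} (hf : LipschitzWith 1 f)
    {u v : M} (hfz : f z = 0) {δ P : ℝ} (hδ0 : 0 < δ) (hδ1 : δ ≤ 1) (hP0 : 0 ≤ P)
    (hP : 4 * P ≤ δ * (dist u z + dist v z)) :
    ∃ g : M → ℝ, LipschitzWith (1 + δ.toNNReal) g ∧ EqOn g f (closedBall z P) ∧
      EqOn g f (ball z (3 * (dist u z + dist v z) / δ))ᶜ ∧ (1 - δ) * dist u v ≤ g u - g v := by
  obtain ⟨h, hlip, hhf, hhuv⟩ := exists_lipschitzWith_one_eqOn_closedBall hf hfz hδ0.le hδ1 hP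
  set s := dist u z + dist v z
  set Q := 3 * s / δ
  set η : M → ℝ := fun x => δ * max (Q - dist x z) 0
  have hη0 : ∀ x, 0 ≤ η x := fun x => by positivity
  have hηlip : LipschitzWith δ.toNNReal η := by
    have hk := ((LipschitzWith.const Q).sub (LipschitzWith.dist_left z)).max_const 0
    refine LipschitzWith.of_dist_le_mul fun x y => ?_
    rw [Real.coe_toNNReal _ hδ0.le, Real.dist_eq, ← mul_sub, abs_mul, abs_of_pos hδ0,
      ← Real.dist_eq]
    simpa using mul_le_mul_of_nonneg_left (hk.dist_le_mul x y) hδ0.le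
  -- `Q = 3 s / δ` makes `η ≥ 2 dist · z ≥ |h - f|` on `closedBall z s`, which contains `u` and `v`
  have hwindow : ∀ x, dist x z ≤ s → |h x - f x| ≤ η x := by
    intro x hx
    have hhz : h z = 0 := (hhf (mem_closedBall_self hP0)).trans hfz
    have hh := hlip.dist_le_mul x z
    have hfx := hf.dist_le_mul x z
    simp only [NNReal.coe_one, one_mul, Real.dist_eq, hhz, hfz, sub_zero] at hh hfx
    have hδQ : δ * Q = 3 * s := mul_div_cancel₀ _ hδ0.ne'
    have : δ * (Q - dist x z) ≤ η x := mul_le_mul_of_nonneg_left (le_max_left _ _) hδ0.le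
    calc |h x - f x| ≤ |h x| + |f x| := abs_sub _ _
      _ ≤ δ * (Q - dist x z) := by nlinarith [dist_nonneg (x := x) (y := z)]
      _ ≤ η x := this
  refine ⟨fun x => max (f x - η x) (min (h x) (f x + η x)), ?_, fun x hx => ?_, fun x hx => ?_, ?_⟩
  · exact ((hf.sub hηlip).max (hlip.min (hf.add hηlip))).weaken
      (max_le le_rfl (max_le le_self_add le_rfl))
  · simp only [hhf hx]
    rw [min_eq_left (by linarith [hη0 x]), max_eq_right (by linarith [hη0 x])]
  · have hηx : η x = 0 := by
      simp only [mem_compl_iff, mem_ball, not_lt] at hx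
      simp [η, hx]
    simp only [hηx, sub_zero, add_zero]
    exact max_eq_left (min_le_right _ _)
  · have hclamp : ∀ x, dist x z ≤ s → max (f x - η x) (min (h x) (f x + η x)) = h x := by
      intro x hx
      have := abs_le.1 (hwindow x hx)
      rw [min_eq_left (by linarith), max_eq_right (by linarith)]
    simp only [hclamp u (le_add_of_nonneg_right dist_nonneg),
      hclamp v (le_add_of_nonneg_left dist_nonneg)]
    exact hhuv

theorem exists_seq_lipschitzWith_pairwise_disjoint_support {f : M → ℝ} (hf : LipschitzWith 1 f)
    (hfz : f z = 0) {u v : ℕ → M} {δ : ℝ} (hδ0 : 0 < δ) (hδ1 : δ ≤ 1) {N : ℕ}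
    (hfar : ∀ R, ∃ i, N ≤ i ∧ R ≤ dist (u i) z + dist (v i) z) :
    ∃ (i : ℕ → ℕ) (g : ℕ → M → ℝ), (∀ l, N ≤ i l) ∧
      (∀ l, LipschitzWith (1 + δ.toNNReal) (g l)) ∧ (∀ l, g l z = 0) ∧
      (∀ l, (1 - δ) * dist (u (i l)) (v (i l)) ≤ g l (u (i l)) - g l (v (i l))) ∧
      Pairwise (Disjoint on fun l => support (g l - f)) := by
  choose idx hidxN hidx using hfar
  set s : ℕ → ℝ := fun i => dist (u i) z + dist (v i) z
  -- the `l`-th pair lies beyond `4 P l / δ`; its perturbation lives on `P l < dist · z < P (l + 1)`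
  set next : ℝ → ℝ := fun P => 3 * s (idx (4 * P / δ)) / δ
  set P : ℕ → ℝ := fun l => next^[l] 0
  set i : ℕ → ℕ := fun l => idx (4 * P l / δ)
  have hPi : ∀ l, 4 * P l ≤ δ * s (i l) := fun l => (div_le_iff₀' hδ0).1 (hidx _)
  have hPsucc : ∀ l, P (l + 1) = 3 * s (i l) / δ := fun l => Function.iterate_succ_apply' _ _ _
  have hP0 : ∀ l, 0 ≤ P l
    | 0 => le_rfl
    | l + 1 => by rw [hPsucc]; positivity
  have hmono : Monotone P := by
    refine monotone_nat_of_le_succ fun l => ?_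
    rw [hPsucc, le_div_iff₀ hδ0]
    nlinarith [hPi l, hP0 l, mul_le_mul_of_nonneg_left hδ1 (hP0 l)]
  choose g hglip hgin hgout hguv using fun l =>
    exists_lipschitzWith_eqOn_closedBall_eqOn_compl_ball hf hfz hδ0 hδ1 (hP0 l) (hPi l)
  have hsupp : ∀ l, support (g l - f) ⊆ (dist · z) ⁻¹' Ioo (P l) (P (l + 1)) := by
    intro l x hx
    by_contra hxl
    rw [mem_preimage, mem_Ioo, not_and_or, not_lt, not_lt, hPsucc] at hxl
    refine hx (sub_eq_zero.2 ?_)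
    rcases hxl with hx | hx
    · exact hgin l hx
    · exact hgout l (by simpa using hx)
  refine ⟨i, g, fun l => hidxN _, hglip, fun l => (hgin l (mem_closedBall_self (hP0 l))).trans hfz,
    hguv, fun l m hlm => ?_⟩
  exact ((hmono.pairwise_disjoint_on_Ioo_succ hlm).preimage _).mono (hsupp l) (hsupp m)

end

theorem frequently_two_sub_le_norm_add_molecule {M : Type*} [MetricSpace M] {z : M}
    (F : NormedSpace.Dual ℝ (Lip0 M z)) (hF : ‖F‖ = 1)
    {u v : ℕ → M} (huv : ∀ i, u i ≠ v i)
    (hfar : ∀ R, ∃ᶠ i in atTop, R ≤ dist (u i) z + dist (v i) z) {ε : ℝ} (hε : 0 < ε) :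
    ∃ᶠ i in atTop, 2 - ε ≤ ‖F + molecule M z (u i) (v i)‖ := by
  refine frequently_atTop.2 fun N => ?_
  set δ := min (ε / 5) 1
  have hδ0 : 0 < δ := lt_min (by positivity) one_pos
  have hδ1 : δ ≤ 1 := min_le_right _ _
  have hδε : 5 * δ ≤ ε := by linarith [min_le_left (ε / 5) 1]
  obtain ⟨f, hf1, hFf⟩ := NormedSpace.Dual.exists_lt_apply_of_lt_norm F (r := 1 - δ) (by linarith)
  obtain ⟨i, g, hiN, hglip, hgz, hguv, hdisj⟩ :=
    exists_seq_lipschitzWith_pairwise_disjoint_support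
      (Lip0.lipschitzWith_of_norm_le (K := 1) (by simpa using hf1)) f.2.2 hδ0 hδ1
      fun R => frequently_atTop.1 (hfar R) N
  set G : ℕ → Lip0 M z := fun l => ⟨g l, ⟨_, hglip l⟩, hgz l⟩
  have hG : ∀ l, ‖G l‖ ≤ 1 + δ := fun l => by
    simpa [Real.coe_toNNReal _ hδ0.le] using Lip0.norm_le_of_lipschitzWith (f := G l) (hglip l)
  obtain ⟨n, hn⟩ := exists_nat_gt (6 / δ)
  have hsum : ‖∑ l ∈ Finset.range n, (G l - f)‖ ≤ 6 := by
    have hGf : ∀ l, ‖G l - f‖ ≤ (3 : ℝ≥0) := fun l => by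
      have := norm_sub_le (G l) f
      norm_num
      linarith [hG l]
    have h := Lip0.norm_sum_le_of_pairwise_disjoint_support (w := fun l => G l - f) hGf hdisj
      (Finset.range n)
    exact h.trans_eq (by norm_num)
  obtain ⟨l, -, hl⟩ := NormedSpace.Dual.exists_neg_le_apply_of_norm_sum_le F hF.le hsum
    ((div_lt_iff₀ hδ0).1 hn)
  refine ⟨i l, hiN l, ?_⟩
  refine (two_sub_le_norm_add_of_apply hδ0.le (hG l) ?_ ?_).trans' (by linarith)
  · rw [map_sub] at hl
    linarith
  · rw [molecule_apply, le_div_iff₀ (dist_pos.2 (huv (i l)))]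
    exact hguv l

end DeltaPaper

/-- Proposition 4.4. Let `(m_{u_iv_i})` be a sequence of molecules such
that at least one of the sequences `(u_i)` and `(v_i)` is unbounded. Then
`limsup_i ‖F + m_{u_iv_i}‖ = 2` for every `F ∈ S_{Lip₀(M)*}`. -/
theorem statement12 {M : Type*} [MetricSpace M] (z : M)
    (u v : ℕ → M) (huv : ∀ i, u i ≠ v i)
    (hub : ¬ Bornology.IsBounded (Set.range u) ∨ ¬ Bornology.IsBounded (Set.range v))
    (F : Dual ℝ ↥(Lip0 M z)) (hF : ‖F‖ = 1) :
    limsup (fun i => ‖F + molecule M z (u i) (v i)‖) atTop = 2 := by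
  have hfar : ∀ R, ∃ᶠ i in atTop, R ≤ dist (u i) z + dist (v i) z := fun R => by
    rcases hub with hu | hv
    · exact (frequently_lt_dist_of_not_isBounded_range hu z R).mono fun i hi =>
        hi.le.trans (le_add_of_nonneg_right dist_nonneg)
    · exact (frequently_lt_dist_of_not_isBounded_range hv z R).mono fun i hi =>
        hi.le.trans (le_add_of_nonneg_left dist_nonneg)
  refine limsup_eq_of_forall_le_of_frequently_ge (fun i => ?_)
    fun ε hε => frequently_two_sub_le_norm_add_molecule F hF huv hfar hε
  calc ‖F + molecule M z (u i) (v i)‖ ≤ ‖F‖ + ‖molecule M z (u i) (v i)‖ := norm_add_le _ _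
    _ ≤ 2 := by linarith [norm_molecule_le_one (z := z) (u i) (v i)]
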